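/- arXiv:1010.0743 — 2 statements merged into one kernel-verified Lean document; each statement's English description precedes it below -/
import Mathlib

section
/- Let 𝓑, 𝓔, 𝓢, 𝓥, 𝓩 be finite sets. Let B be uniformly distributed on 𝓑, let E be a random variable on 𝓔 with arbitrary distribution, let (𝓕, F) be a family of two-universal hash functions from 𝓑 to 𝓢, and suppose B, E, F are mutually statistically independent. Let λ : 𝓑 × 𝓔 → 𝓥 be a deterministic map, let W be a channel from 𝓥 to 𝓩, and let Z be a random variable on 𝓩 whose conditional distribution given V = λ(B, E) is W(·|V) and which is conditionally independent of (B, E, F) given V. Then for every ρ with 0 < ρ ≤ 1: I(F(B); Z | F) ≤ Σ_{e∈𝓔} P_E(e) · (|𝓢|/|𝓑|)^ρ · exp( ψ(ρ, W, P_{V|E=e}) ) / ρ, where P_{V|E=e} denotes the probability mass function of λ(B, e) when B is uniform on 𝓑. -/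
open scoped BigOperators

noncomputable section

/-- A probability mass function on a finite type. -/
def IsPMF {α : Type} [Fintype α] (p : α → ℝ) : Prop :=
  (∀ a, 0 ≤ p a) ∧ ∑ a, p a = 1

/-- A channel, i.e. a conditional probability mass function. -/
def IsChannel {α β : Type} [Fintype α] [Fintype β] (W : α → β → ℝ) : Prop :=
  ∀ a, IsPMF (W a)

/-- Mutual information (natural base) of a joint pmf on a product of finite types,
with the usual convention that terms with zero probability vanish
(recall `Real.log 0 = 0` in Mathlib). -/
def mutualInfo {α β : Type} [Fintype α] [Fintype β] (p : α × β → ℝ) : ℝ :=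
  ∑ a, ∑ b, p (a, b) *
    Real.log (p (a, b) / ((∑ b', p (a, b')) * (∑ a', p (a', b))))

/-- Shannon entropy (natural base). -/
def entropy {α : Type} [Fintype α] (p : α → ℝ) : ℝ :=
  -∑ a, p a * Real.log (p a)

/-- Conditional entropy H(A|B) (natural base) of a joint pmf on `α × β`. -/
def condEntropy {α β : Type} [Fintype α] [Fintype β] (p : α × β → ℝ) : ℝ :=
  -∑ a, ∑ b, p (a, b) * Real.log (p (a, b) / ∑ a', p (a', b))

/-- Conditional mutual information I(B;C|A) (natural base) of a joint pmf on `α × β × γ`. -/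
def condMutualInfo {α β γ : Type} [Fintype α] [Fintype β] [Fintype γ]
    (p : α × β × γ → ℝ) : ℝ :=
  ∑ a, ∑ b, ∑ c, p (a, b, c) *
    Real.log (p (a, b, c) * (∑ b', ∑ c', p (a, b', c')) /
      ((∑ c', p (a, b, c')) * (∑ b', p (a, b', c))))

/-- `(μ, hash)` is a family of two-universal hash functions from `L` to `M`:
the random choice of the function is given by the pmf `μ` on the index set `ι`,
and for any two distinct inputs the collision probability is at most `1 / |M|`. -/
def TwoUniversal {ι L M : Type} [Fintype ι] [Fintype L] [Fintype M] [DecidableEq M]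
    (μ : ι → ℝ) (hash : ι → L → M) : Prop :=
  IsPMF μ ∧ ∀ x₁ x₂ : L, x₁ ≠ x₂ →
    ∑ i, μ i * (if hash i x₁ = hash i x₂ then (1 : ℝ) else 0) ≤ 1 / Fintype.card M

/-!
For a fixed hash function, `log x ≤ (x ^ ρ - 1) / ρ` bounds `I(f(B); Z)` by
`(|S| ^ ρ · ∑ P_{f(B)Z} ^ (1 + ρ) · P_Z ^ (-ρ) - 1) / ρ`, the entropy part being absorbed by
`H(f(B)) ≤ log |S|`. Inside the fiber of `f(b)`, the mass other than that of `b` itself has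
expectation at most `1 / |S|` of the total mass over a two-universal family; with subadditivity
and concavity of `t ↦ t ^ ρ` this bounds the average of the hashed sums by
`∑ P_{BZ} ^ (1 + ρ) · P_Z ^ (-ρ) + |S| ^ (-ρ)`, and the last term cancels the `-1`. Joint
convexity of `(w, r) ↦ w ^ (1 + ρ) · r ^ (-ρ)` then moves the average over `E` outside, and for
uniform `B` the sum given `E = e` is `|B| ^ (-ρ) · exp ψ(ρ, W, P_{V|E=e})`.
-/

open Finset Real

lemma log_le_rpow_sub_one_div {x ρ : ℝ} (hx : 0 < x) (hρ : 0 < ρ) :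
    log x ≤ (x ^ ρ - 1) / ρ := by
  rw [le_div_iff₀ hρ, mul_comm, ← log_rpow hx]
  exact log_le_sub_one_of_pos (rpow_pos_of_pos hx ρ)

lemma mul_log_div_mul_le {p q r K ρ : ℝ} (hp : 0 ≤ p) (hpq : p ≤ q) (hpr : p ≤ r) (hK : 0 < K)
    (hρ : 0 < ρ) :
    p * log (p / (q * r)) ≤ (K ^ ρ * (p ^ (1 + ρ) * r ^ (-ρ)) - p) / ρ - p * log (K * q) := by
  rcases hp.eq_or_lt with rfl | hp
  · simp [zero_rpow (by linarith : 1 + ρ ≠ 0)]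
  have hq := hp.trans_le hpq
  have hr := hp.trans_le hpr
  calc p * log (p / (q * r)) = p * log (K * p / r) - p * log (K * q) := by
        rw [← mul_sub, ← log_div (by positivity) (by positivity)]
        congr 2
        field_simp
    _ ≤ p * (((K * p / r) ^ ρ - 1) / ρ) - p * log (K * q) := by
        gcongr
        exact log_le_rpow_sub_one_div (by positivity) hρ
    _ = (K ^ ρ * (p ^ (1 + ρ) * r ^ (-ρ)) - p) / ρ - p * log (K * q) := by
        rw [div_rpow (by positivity) hr.le, mul_rpow hK.le hp.le, rpow_neg hr.le,
          rpow_one_add' hp.le (by linarith)]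
        ring

lemma rpow_neg_mul_rpow_one_add {x : ℝ} (hx : 0 ≤ x) (ρ : ℝ) : x ^ (-ρ) * x ^ (1 + ρ) = x := by
  have h : -ρ + (1 + ρ) = 1 := by ring
  rw [← rpow_add' hx (by rw [h]; exact one_ne_zero), h, rpow_one]

lemma mul_div_rpow_one_add {w r ρ : ℝ} (hw : 0 ≤ w) (hr : 0 ≤ r) (hwr : r = 0 → w = 0)
    (hρ : 0 < ρ) : r * (w / r) ^ (1 + ρ) = w ^ (1 + ρ) * r ^ (-ρ) := by
  rcases hr.eq_or_lt with rfl | hr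
  · simp [hwr rfl, zero_rpow (by linarith : 1 + ρ ≠ 0)]
  · rw [div_rpow hw hr.le, rpow_neg hr.le, rpow_one_add' hr.le (by linarith)]
    field_simp

lemma sum_rpow_one_add_mul_sum_rpow_neg_le {ε : Type*} [Fintype ε] {ρ : ℝ} (hρ : 0 < ρ)
    {p w r : ε → ℝ} (hp : ∀ e, 0 ≤ p e) (hw : ∀ e, 0 ≤ w e) (hr : ∀ e, 0 ≤ r e)
    (hwr : ∀ e, r e = 0 → w e = 0) :
    (∑ e, p e * w e) ^ (1 + ρ) * (∑ e, p e * r e) ^ (-ρ)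
      ≤ ∑ e, p e * (w e ^ (1 + ρ) * r e ^ (-ρ)) := by
  set C := ∑ e, p e * r e
  have hY : 0 ≤ ∑ e, p e * (w e ^ (1 + ρ) * r e ^ (-ρ)) :=
    sum_nonneg fun e _ => mul_nonneg (hp e) (by have := hw e; have := hr e; positivity)
  have hC : 0 ≤ C := sum_nonneg fun e _ => mul_nonneg (hp e) (hr e)
  rcases hC.eq_or_lt with hC | hC
  · rwa [← hC, zero_rpow (neg_ne_zero.2 hρ.ne'), mul_zero]
  -- Jensen for `t ↦ t ^ (1 + ρ)` at the points `w e / r e` with weights `p e * r e / C`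
  have hJ := (convexOn_rpow (by linarith : 1 ≤ 1 + ρ)).map_sum_le (t := univ)
    (w := fun e => p e * r e / C) (p := fun e => w e / r e)
    (fun e _ => div_nonneg (mul_nonneg (hp e) (hr e)) hC.le)
    (by rw [← sum_div, div_self hC.ne'])
    (fun e _ => Set.mem_Ici.2 (div_nonneg (hw e) (hr e)))
  simp only [smul_eq_mul, div_mul_eq_mul_div, mul_assoc, mul_div_cancel_of_imp' (hwr _),
    mul_div_rpow_one_add (hw _) (hr _) (hwr _) hρ, ← sum_div] at hJ
  rw [div_rpow (sum_nonneg fun e _ => mul_nonneg (hp e) (hw e)) hC.le,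
    div_le_div_iff₀ (rpow_pos_of_pos hC _) hC, rpow_one_add' hC.le (by linarith)] at hJ
  rw [rpow_neg hC.le, ← div_eq_mul_inv, div_le_iff₀ (rpow_pos_of_pos hC _)]
  exact le_of_mul_le_mul_right (hJ.trans_eq (by ring)) hC

lemma sum_fiber_mul {α β : Type*} [Fintype α] [Fintype β] [DecidableEq β] (f : α → β)
    (c : α → ℝ) (g : β → ℝ) :
    ∑ v, (∑ a, if f a = v then c a else 0) * g v = ∑ a, c a * g (f a) := by
  simp_rw [sum_mul, ite_mul, zero_mul]
  rw [sum_comm]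
  simp

lemma IsPMF.nonempty {α : Type} [Fintype α] {p : α → ℝ} (hp : IsPMF p) : Nonempty α := by
  by_contra h
  simpa [not_nonempty_iff.1 h] using hp.2

lemma isPMF_uniform (α : Type) [Fintype α] [Nonempty α] :
    IsPMF (fun _ : α => 1 / (Fintype.card α : ℝ)) :=
  ⟨fun _ => by positivity, by simp⟩

lemma IsPMF.mul_channel {α β : Type} [Fintype α] [Fintype β] {P : α → ℝ} {W : α → β → ℝ}
    (hP : IsPMF P) (hW : IsChannel W) : IsPMF (fun x : α × β => P x.1 * W x.1 x.2) :=
  ⟨fun x => mul_nonneg (hP.1 _) ((hW _).1 _), by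
    simp [Fintype.sum_prod_type, ← mul_sum, (hW _).2, hP.2]⟩

lemma IsPMF.mix {ε α : Type} [Fintype ε] [Fintype α] {w : ε → ℝ} {p : ε → α → ℝ}
    (hw : IsPMF w) (hp : ∀ e, IsPMF (p e)) : IsPMF (fun a => ∑ e, w e * p e a) :=
  ⟨fun a => sum_nonneg fun e _ => mul_nonneg (hw.1 e) ((hp e).1 a), by
    rw [sum_comm]; simp [← mul_sum, (hp _).2, hw.2]⟩

lemma IsPMF.fst {α β : Type} [Fintype α] [Fintype β] {p : α × β → ℝ} (hp : IsPMF p) :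
    IsPMF (fun a => ∑ b, p (a, b)) :=
  ⟨fun a => sum_nonneg fun b _ => hp.1 _, by rw [← Fintype.sum_prod_type]; exact hp.2⟩

def mapFst {α β γ : Type*} [Fintype α] [DecidableEq γ] (f : α → γ) (p : α × β → ℝ) :
    γ × β → ℝ :=
  fun cb => ∑ a, if f a = cb.1 then p (a, cb.2) else 0

lemma sum_mapFst {α β γ : Type*} [Fintype α] [Fintype γ] [DecidableEq γ] (f : α → γ)
    (p : α × β → ℝ) (b : β) : ∑ c, mapFst f p (c, b) = ∑ a, p (a, b) := by
  simpa [mapFst] using sum_fiber_mul f (fun a => p (a, b)) 1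

lemma IsPMF.mapFst {α β γ : Type} [Fintype α] [Fintype β] [Fintype γ] [DecidableEq γ]
    {p : α × β → ℝ} (hp : IsPMF p) (f : α → γ) : IsPMF (mapFst f p) := by
  refine ⟨fun x => sum_nonneg fun a _ => ?_, ?_⟩
  · split_ifs
    exacts [hp.1 _, le_rfl]
  · rw [Fintype.sum_prod_type_right]
    simp_rw [sum_mapFst, ← Fintype.sum_prod_type_right]
    exact hp.2

lemma sum_mul_log_card_mul_nonneg {α : Type} [Fintype α] {q : α → ℝ} (hq : IsPMF q) :
    0 ≤ ∑ a, q a * log (Fintype.card α * q a) := by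
  have := hq.nonempty
  have hK : (0 : ℝ) < Fintype.card α := by exact_mod_cast Fintype.card_pos
  -- `x - 1 ≤ x log x` at `x = |α| q a`
  have key : ∀ a, q a - 1 / Fintype.card α ≤ q a * log (Fintype.card α * q a) := by
    intro a
    have := Real.self_sub_one_le_mul_log (mul_nonneg hK.le (hq.1 a))
    calc q a - 1 / Fintype.card α = (Fintype.card α * q a - 1) / Fintype.card α := by
          field_simp
      _ ≤ Fintype.card α * q a * log (Fintype.card α * q a) / Fintype.card α := by gcongr
      _ = q a * log (Fintype.card α * q a) := by field_simp
  calc (0 : ℝ) = ∑ a, (q a - 1 / Fintype.card α) := by simp [hq.2, hK.ne']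
    _ ≤ _ := sum_le_sum fun a _ => key a

/-- `exp (ρ · D_{1+ρ}(p ‖ #_α ⊗ p_β))`, where `D_{1+ρ}` is the Rényi divergence, `#_α` the counting
measure and `p_β` the second marginal. -/
def renyiSum {α β : Type*} [Fintype α] [Fintype β] (ρ : ℝ) (p : α × β → ℝ) : ℝ :=
  ∑ a, ∑ b, p (a, b) ^ (1 + ρ) * (∑ a', p (a', b)) ^ (-ρ)

/-- `gallagerSum ρ W P = exp ψ(ρ, W, P)`. -/
def gallagerSum {V Z : Type*} [Fintype V] [Fintype Z] (ρ : ℝ) (W : V → Z → ℝ) (P : V → ℝ) : ℝ :=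
  ∑ z, ∑ v, P v * W v z ^ (1 + ρ) * (∑ v', P v' * W v' z) ^ (-ρ)

lemma renyiSum_eq_sum_snd {α β : Type*} [Fintype α] [Fintype β] (ρ : ℝ) (p : α × β → ℝ) :
    renyiSum ρ p = ∑ b, (∑ a, p (a, b) ^ (1 + ρ)) * (∑ a, p (a, b)) ^ (-ρ) := by
  rw [renyiSum, sum_comm]
  simp_rw [sum_mul]

lemma mutualInfo_le_renyiSum {α β : Type} [Fintype α] [Fintype β] {p : α × β → ℝ}
    (hp : IsPMF p) {ρ : ℝ} (hρ : 0 < ρ) :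
    mutualInfo p ≤ ((Fintype.card α : ℝ) ^ ρ * renyiSum ρ p - 1) / ρ := by
  have := hp.fst.nonempty
  have hK : (0 : ℝ) < Fintype.card α := by exact_mod_cast Fintype.card_pos
  have hp1 := hp.2
  rw [Fintype.sum_prod_type] at hp1
  calc mutualInfo p
      ≤ ∑ a, ∑ b, ((Fintype.card α ^ ρ * (p (a, b) ^ (1 + ρ) * (∑ a', p (a', b)) ^ (-ρ))
          - p (a, b)) / ρ - p (a, b) * log (Fintype.card α * ∑ b', p (a, b'))) :=
        sum_le_sum fun a _ => sum_le_sum fun b _ => mul_log_div_mul_le (hp.1 _)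
          (single_le_sum (fun b' _ => hp.1 (a, b')) (mem_univ b))
          (single_le_sum (fun a' _ => hp.1 (a', b)) (mem_univ a)) hK hρ
    _ = ((Fintype.card α : ℝ) ^ ρ * renyiSum ρ p - 1) / ρ
          - ∑ a, (∑ b, p (a, b)) * log (Fintype.card α * ∑ b', p (a, b')) := by
        simp only [sum_sub_distrib, ← sum_div, ← mul_sum, ← sum_mul, hp1, renyiSum]
    _ ≤ ((Fintype.card α : ℝ) ^ ρ * renyiSum ρ p - 1) / ρ := by
        linarith [sum_mul_log_card_mul_nonneg hp.fst]

lemma renyiSum_mix_le {ε α β : Type*} [Fintype ε] [Fintype α] [Fintype β] {ρ : ℝ} (hρ : 0 < ρ)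
    {w : ε → ℝ} {p : ε → α × β → ℝ} (hw : ∀ e, 0 ≤ w e) (hp : ∀ e x, 0 ≤ p e x) :
    renyiSum ρ (fun x => ∑ e, w e * p e x) ≤ ∑ e, w e * renyiSum ρ (p e) := by
  have hmarg : ∀ e b, 0 ≤ ∑ a', p e (a', b) := fun e b => sum_nonneg fun a' _ => hp e _
  calc renyiSum ρ (fun x => ∑ e, w e * p e x)
      = ∑ a, ∑ b, (∑ e, w e * p e (a, b)) ^ (1 + ρ)
          * (∑ e, w e * ∑ a', p e (a', b)) ^ (-ρ) := by
        simp_rw [renyiSum, mul_sum]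
        exact sum_congr rfl fun a _ => sum_congr rfl fun b _ => by rw [sum_comm]
    _ ≤ ∑ a, ∑ b, ∑ e, w e * (p e (a, b) ^ (1 + ρ) * (∑ a', p e (a', b)) ^ (-ρ)) :=
        sum_le_sum fun a _ => sum_le_sum fun b _ =>
          sum_rpow_one_add_mul_sum_rpow_neg_le hρ hw (fun e => hp e _) (fun e => hmarg e b)
            fun e he => le_antisymm (he ▸ single_le_sum (fun a' _ => hp e (a', b)) (mem_univ a))
              (hp e _)
    _ = ∑ e, w e * renyiSum ρ (p e) := by
        simp_rw [renyiSum, mul_sum]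
        exact (sum_congr rfl fun a _ => sum_comm).trans sum_comm

lemma renyiSum_uniform_mul_channel {α β γ : Type*} [Fintype α] [Fintype β] [Fintype γ]
    [DecidableEq γ] [Nonempty α] (f : α → γ) {W : γ → β → ℝ} (hW : ∀ v z, 0 ≤ W v z) (ρ : ℝ) :
    renyiSum ρ (fun x : α × β => 1 / Fintype.card α * W (f x.1) x.2)
      = (1 / Fintype.card α : ℝ) ^ ρ *
          gallagerSum ρ W (fun v => ∑ a, if f a = v then 1 / Fintype.card α else 0) := by
  set c : ℝ := 1 / Fintype.card α
  have hc : 0 < c := by positivity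
  simp_rw [gallagerSum, sum_fiber_mul, mul_assoc, sum_fiber_mul, renyiSum, mul_sum]
  rw [sum_comm]
  refine sum_congr rfl fun z _ => sum_congr rfl fun a _ => ?_
  rw [mul_rpow hc.le (hW _ _), rpow_add hc, rpow_one]
  ring

lemma sum_fiber_rpow_one_add_le {α γ : Type*} [Fintype α] [Fintype γ] [DecidableEq γ]
    (f : α → γ) {a : α → ℝ} (ha : ∀ x, 0 ≤ a x) {ρ : ℝ} (hρ₀ : 0 < ρ) (hρ₁ : ρ ≤ 1) :
    ∑ s, (∑ x, if f x = s then a x else 0) ^ (1 + ρ)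
      ≤ ∑ x, (a x ^ (1 + ρ) + a x * ((∑ y, if f y = f x then a y else 0) - a x) ^ ρ) := by
  set Q : γ → ℝ := fun s => ∑ x, if f x = s then a x else 0
  have hQ : ∀ s, 0 ≤ Q s := fun s => sum_nonneg fun x _ => by split_ifs <;> simp [ha x]
  have hQa : ∀ x, a x ≤ Q (f x) := fun x => by
    simpa using single_le_sum (f := fun y => if f y = f x then a y else 0)
      (fun y _ => by split_ifs <;> simp [ha y]) (mem_univ x)
  calc ∑ s, Q s ^ (1 + ρ) = ∑ x, a x * Q (f x) ^ ρ := by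
        rw [← sum_fiber_mul f a (fun s => Q s ^ ρ)]
        exact sum_congr rfl fun s _ => rpow_one_add' (hQ s) (by linarith)
    _ ≤ _ := by
        refine sum_le_sum fun x _ => ?_
        rw [rpow_one_add' (ha x) (by linarith), ← mul_add]
        refine mul_le_mul_of_nonneg_left ?_ (ha x)
        simpa using rpow_add_le_add_rpow (ha x) (sub_nonneg.2 (hQa x)) hρ₀.le hρ₁

namespace TwoUniversal

variable {ι L M : Type} [Fintype ι] [Fintype L] [Fintype M] [DecidableEq M]
  {μ : ι → ℝ} {hash : ι → L → M}

lemma sum_mul_sum_collision_le (h : TwoUniversal μ hash) {a : L → ℝ} (ha : ∀ x, 0 ≤ a x)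
    (x : L) :
    ∑ i, μ i * ((∑ y, if hash i y = hash i x then a y else 0) - a x)
      ≤ (∑ y, a y) / Fintype.card M := by
  classical
  calc ∑ i, μ i * ((∑ y, if hash i y = hash i x then a y else 0) - a x)
      = ∑ y ∈ univ.erase x, a y * ∑ i, μ i * (if hash i y = hash i x then (1 : ℝ) else 0) := by
        have hx : ∀ i, (∑ y, if hash i y = hash i x then a y else 0) - a x
            = ∑ y ∈ univ.erase x, if hash i y = hash i x then a y else 0 := fun i => by
          rw [← add_sum_erase _ _ (mem_univ x), if_pos rfl, add_sub_cancel_left]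
        simp_rw [hx, mul_sum]
        rw [sum_comm]
        refine sum_congr rfl fun y _ => sum_congr rfl fun i _ => ?_
        split_ifs <;> ring
    _ ≤ ∑ y ∈ univ.erase x, a y * (1 / Fintype.card M) :=
        sum_le_sum fun y hy => mul_le_mul_of_nonneg_left (h.2 y x (ne_of_mem_erase hy)) (ha y)
    _ ≤ ∑ y, a y * (1 / Fintype.card M) :=
        sum_le_sum_of_subset_of_nonneg (subset_univ _) fun y _ _ =>
          mul_nonneg (ha y) (by positivity)
    _ = (∑ y, a y) / Fintype.card M := by rw [← sum_mul, mul_one_div]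

lemma sum_mul_sum_fiber_rpow_le (h : TwoUniversal μ hash) {a : L → ℝ} (ha : ∀ x, 0 ≤ a x)
    {ρ : ℝ} (hρ₀ : 0 < ρ) (hρ₁ : ρ ≤ 1) :
    ∑ i, μ i * ∑ s, (∑ x, if hash i x = s then a x else 0) ^ (1 + ρ)
      ≤ ∑ x, a x ^ (1 + ρ) + (Fintype.card M : ℝ) ^ (-ρ) * (∑ x, a x) ^ (1 + ρ) := by
  have ⟨⟨hμ0, hμ1⟩, _⟩ := h
  set T : ι → L → ℝ := fun i x => (∑ y, if hash i y = hash i x then a y else 0) - a x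
  have hT : ∀ i x, 0 ≤ T i x := fun i x => sub_nonneg.2 (by
    simpa using single_le_sum (f := fun y => if hash i y = hash i x then a y else 0)
      (fun y _ => by split_ifs <;> simp [ha y]) (mem_univ x))
  have hJensen : ∀ x, ∑ i, μ i * T i x ^ ρ ≤ ((∑ y, a y) / Fintype.card M) ^ ρ := fun x =>
    calc ∑ i, μ i * T i x ^ ρ ≤ (∑ i, μ i * T i x) ^ ρ := by
          simpa using (concaveOn_rpow hρ₀.le hρ₁).le_map_sum (t := univ) (fun i _ => hμ0 i) hμ1
            (fun i _ => Set.mem_Ici.2 (hT i x))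
      _ ≤ _ := rpow_le_rpow (sum_nonneg fun i _ => mul_nonneg (hμ0 i) (hT i x))
          (h.sum_mul_sum_collision_le ha x) hρ₀.le
  calc ∑ i, μ i * ∑ s, (∑ x, if hash i x = s then a x else 0) ^ (1 + ρ)
      ≤ ∑ i, μ i * ∑ x, (a x ^ (1 + ρ) + a x * T i x ^ ρ) :=
        sum_le_sum fun i _ => mul_le_mul_of_nonneg_left
          (sum_fiber_rpow_one_add_le (hash i) ha hρ₀ hρ₁) (hμ0 i)
    _ = ∑ x, a x ^ (1 + ρ) + ∑ x, a x * ∑ i, μ i * T i x ^ ρ := by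
        simp_rw [mul_sum, mul_add, sum_add_distrib]
        rw [sum_comm, sum_comm (f := fun i x => μ i * (a x * T i x ^ ρ))]
        simp_rw [← sum_mul, hμ1, one_mul]
        refine congrArg _ (sum_congr rfl fun x _ => sum_congr rfl fun i _ => by ring)
    _ ≤ ∑ x, a x ^ (1 + ρ) + ∑ x, a x * ((∑ y, a y) / Fintype.card M) ^ ρ := by
        gcongr with x
        exacts [ha x, hJensen x]
    _ = ∑ x, a x ^ (1 + ρ) + (Fintype.card M : ℝ) ^ (-ρ) * (∑ x, a x) ^ (1 + ρ) := by
        rw [← sum_mul, div_rpow (sum_nonneg fun x _ => ha x) (Nat.cast_nonneg _),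
          rpow_neg (Nat.cast_nonneg _), rpow_one_add' (sum_nonneg fun x _ => ha x) (by linarith)]
        ring

variable {β : Type} [Fintype β]

lemma sum_mul_renyiSum_mapFst_le (h : TwoUniversal μ hash) {p : L × β → ℝ} (hp : IsPMF p)
    {ρ : ℝ} (hρ₀ : 0 < ρ) (hρ₁ : ρ ≤ 1) :
    ∑ i, μ i * renyiSum ρ (mapFst (hash i) p) ≤ renyiSum ρ p + (Fintype.card M : ℝ) ^ (-ρ) := by
  have hR : ∀ b, 0 ≤ ∑ x, p (x, b) := fun b => sum_nonneg fun x _ => hp.1 _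
  calc ∑ i, μ i * renyiSum ρ (mapFst (hash i) p)
      = ∑ b, (∑ i, μ i * ∑ s, mapFst (hash i) p (s, b) ^ (1 + ρ)) * (∑ x, p (x, b)) ^ (-ρ) := by
        simp_rw [renyiSum_eq_sum_snd, sum_mapFst, mul_sum, sum_mul]
        rw [sum_comm]
        simp only [mul_sum, mul_assoc]
    _ ≤ ∑ b, (∑ x, p (x, b) ^ (1 + ρ) + (Fintype.card M : ℝ) ^ (-ρ) * (∑ x, p (x, b)) ^ (1 + ρ))
          * (∑ x, p (x, b)) ^ (-ρ) :=
        sum_le_sum fun b _ => mul_le_mul_of_nonneg_right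
          (h.sum_mul_sum_fiber_rpow_le (fun x => hp.1 (x, b)) hρ₀ hρ₁) (rpow_nonneg (hR b) _)
    _ = renyiSum ρ p + (Fintype.card M : ℝ) ^ (-ρ) := by
        simp_rw [add_mul, sum_add_distrib, mul_assoc, mul_comm (_ ^ (1 + ρ)),
          rpow_neg_mul_rpow_one_add (hR _), ← mul_sum, ← Fintype.sum_prod_type_right, hp.2,
          mul_one, renyiSum_eq_sum_snd]

lemma sum_mul_mutualInfo_mapFst_le (h : TwoUniversal μ hash) {p : L × β → ℝ} (hp : IsPMF p)
    {ρ : ℝ} (hρ₀ : 0 < ρ) (hρ₁ : ρ ≤ 1) :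
    ∑ i, μ i * mutualInfo (mapFst (hash i) p)
      ≤ (Fintype.card M : ℝ) ^ ρ * renyiSum ρ p / ρ := by
  have ⟨⟨hμ0, hμ1⟩, _⟩ := h
  obtain ⟨i⟩ := h.1.nonempty
  obtain ⟨x⟩ := hp.nonempty
  have hK : (0 : ℝ) < Fintype.card M := by
    have : Nonempty M := ⟨hash i x.1⟩
    exact_mod_cast Fintype.card_pos
  calc ∑ i, μ i * mutualInfo (mapFst (hash i) p)
      ≤ ∑ i, μ i * (((Fintype.card M : ℝ) ^ ρ * renyiSum ρ (mapFst (hash i) p) - 1) / ρ) :=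
        sum_le_sum fun i _ => mul_le_mul_of_nonneg_left
          (mutualInfo_le_renyiSum (hp.mapFst _) hρ₀) (hμ0 i)
    _ = ((Fintype.card M : ℝ) ^ ρ * ∑ i, μ i * renyiSum ρ (mapFst (hash i) p) - 1) / ρ := by
        simp only [mul_div_assoc', ← sum_div, mul_sub, sum_sub_distrib, hμ1,
          mul_left_comm _ ((Fintype.card M : ℝ) ^ ρ), ← mul_sum, mul_one]
    _ ≤ ((Fintype.card M : ℝ) ^ ρ * (renyiSum ρ p + (Fintype.card M : ℝ) ^ (-ρ)) - 1) / ρ := by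
        gcongr
        exact h.sum_mul_renyiSum_mapFst_le hp hρ₀ hρ₁
    _ = (Fintype.card M : ℝ) ^ ρ * renyiSum ρ p / ρ := by
        rw [mul_add, ← rpow_add hK, add_neg_cancel, rpow_zero, add_sub_cancel_right]

end TwoUniversal

theorem stmt_5_general {ι B E S V Z : Type} [Fintype ι] [Fintype B] [Fintype E] [Fintype S]
    [Fintype V] [Fintype Z] [DecidableEq S] [DecidableEq V] [Nonempty B]
    (μ : ι → ℝ) (hash : ι → B → S) (hhash : TwoUniversal μ hash)
    (PE : E → ℝ) (hPE : IsPMF PE)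
    (lam : B × E → V) (W : V → Z → ℝ) (hW : IsChannel W)
    (ρ : ℝ) (hρ₀ : 0 < ρ) (hρ₁ : ρ ≤ 1) :
    ∑ i, μ i * mutualInfo (fun sz : S × Z =>
        ∑ b, ∑ e, if hash i b = sz.1
          then (1 / Fintype.card B : ℝ) * PE e * W (lam (b, e)) sz.2 else 0)
      ≤ ∑ e, PE e * ((Fintype.card S : ℝ) / Fintype.card B) ^ ρ *
          (∑ z, ∑ v, (∑ b, if lam (b, e) = v then (1 / Fintype.card B : ℝ) else 0) *
              W v z ^ (1 + ρ) *
              (∑ v', (∑ b, if lam (b, e) = v' then (1 / Fintype.card B : ℝ) else 0) *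
                W v' z) ^ (-ρ)) / ρ := by
  set P : E → B × Z → ℝ := fun e x => 1 / Fintype.card B * W (lam (x.1, e)) x.2
  have hP : ∀ e, IsPMF (P e) := fun e => (isPMF_uniform B).mul_channel fun b => hW (lam (b, e))
  have hjoint : ∀ i, (fun sz : S × Z => ∑ b, ∑ e, if hash i b = sz.1
      then (1 / Fintype.card B : ℝ) * PE e * W (lam (b, e)) sz.2 else 0)
      = mapFst (hash i) (fun x => ∑ e, PE e * P e x) := fun i => by
    funext sz
    refine sum_congr rfl fun b _ => ?_
    split_ifs
    · exact sum_congr rfl fun e _ => by ring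
    · exact sum_const_zero
  simp only [hjoint]
  calc _ ≤ (Fintype.card S : ℝ) ^ ρ * renyiSum ρ (fun x => ∑ e, PE e * P e x) / ρ :=
        hhash.sum_mul_mutualInfo_mapFst_le (hPE.mix hP) hρ₀ hρ₁
    _ ≤ (Fintype.card S : ℝ) ^ ρ * (∑ e, PE e * renyiSum ρ (P e)) / ρ := by
        gcongr
        exact renyiSum_mix_le hρ₀ hPE.1 fun e => (hP e).1
    _ = _ := by
        rw [mul_sum, sum_div]
        refine sum_congr rfl fun e _ => ?_
        rw [renyiSum_uniform_mul_channel (fun b => lam (b, e)) (fun v => (hW v).1),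
          div_eq_mul_one_div (Fintype.card S : ℝ), mul_rpow (Nat.cast_nonneg _) (by positivity)]
        simp only [gallagerSum]
        ring

/-- Eqs. (8)–(9) of the paper.  `B` is uniform on `B`, `E` has pmf `PE`,
the hash choice `F` (pmf `μ` on `ι`) is independent of `(B, E)`, `lam : B × E → V` is the
(deterministic) encoder, `W` is a channel from `V` to `Z`, and `Z` is conditionally
independent of `(B, E, F)` given `V = lam (B, E)`.  Hence the joint pmf of
`(hash i (B), Z)` is as displayed on the left, and for `0 < ρ ≤ 1`,
`I(F(B); Z | F) ≤ ∑ e, PE e * (|S|/|B|)^ρ * exp(ψ(ρ, W, P_{V|E=e})) / ρ`,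
where `P_{V|E=e}` is the pmf of `lam (B, e)` for uniform `B`. -/
theorem stmt_5 {ι B E S V Z : Type} [Fintype ι] [Fintype B] [Fintype E] [Fintype S]
    [Fintype V] [Fintype Z] [DecidableEq S] [DecidableEq V] [Nonempty B] [Nonempty S]
    (μ : ι → ℝ) (hash : ι → B → S) (hhash : TwoUniversal μ hash)
    (PE : E → ℝ) (hPE : IsPMF PE)
    (lam : B × E → V) (W : V → Z → ℝ) (hW : IsChannel W)
    (ρ : ℝ) (hρ₀ : 0 < ρ) (hρ₁ : ρ ≤ 1) :
    ∑ i, μ i * mutualInfo (fun sz : S × Z =>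
        ∑ b, ∑ e, if hash i b = sz.1
          then (1 / Fintype.card B : ℝ) * PE e * W (lam (b, e)) sz.2 else 0)
      ≤ ∑ e, PE e * ((Fintype.card S : ℝ) / Fintype.card B) ^ ρ *
          (∑ z, ∑ v, (∑ b, if lam (b, e) = v then (1 / Fintype.card B : ℝ) else 0) *
              W v z ^ (1 + ρ) *
              (∑ v', (∑ b, if lam (b, e) = v' then (1 / Fintype.card B : ℝ) else 0) *
                W v' z) ^ (-ρ)) / ρ :=
  stmt_5_general μ hash hhash PE hPE lam W hW ρ hρ₀ hρ₁
end
end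

section
/- Let 𝓥 and 𝓩 be finite sets, W a channel from 𝓥 to 𝓩, and P a probability mass function on 𝓥. Then lim_{ρ → 0⁺} φ(ρ, W, P) / ρ = I(V; Z), where (V, Z) are jointly distributed with V ~ P and Z | V=v ~ W(·|v), and I(V; Z) is the mutual information in natural base. -/
open scoped BigOperators

noncomputable section

/-
Write `φ(ρ) = log ∑_z (∑_v P(v) W(z|v)^{1/(1-ρ)})^{1-ρ}`. At `ρ = 0` the argument of the
logarithm is `∑_z Q(z) = 1`, where `Q` is the output distribution, so `φ(0) = 0` and the limit is
`φ'(0)`. Differentiating the inner sums gives, for each output `z`, the contribution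
`∑_v P(v) W(z|v) log W(z|v) - Q(z) log Q(z) = ∑_v P(v) W(z|v) log (W(z|v) / Q(z))`, and summing
over `z` yields `I(V; Z)`. Outputs with `Q(z) = 0` contribute a term that vanishes identically
near `ρ = 0`.
-/

open Filter Topology Finset Real

lemma HasDerivAt.tendsto_div_nhdsGT_zero {f : ℝ → ℝ} {f' : ℝ} (hf : HasDerivAt f f' 0)
    (h0 : f 0 = 0) : Tendsto (fun t => f t / t) (𝓝[>] 0) (𝓝 f') := by
  refine hf.tendsto_slope_zero_right.congr fun t => ?_
  simp [h0, div_eq_inv_mul]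

lemma eventually_one_sub_pos_nhds_zero : ∀ᶠ ρ : ℝ in 𝓝 0, 0 < 1 - ρ := by
  filter_upwards [eventually_lt_nhds one_pos] with ρ hρ
  linarith

lemma hasDerivAt_rpow_one_div_one_sub {w : ℝ} (hw : 0 ≤ w) :
    HasDerivAt (fun ρ : ℝ => w ^ (1 / (1 - ρ))) (w * log w) 0 := by
  rcases hw.eq_or_lt with rfl | hw
  · refine (hasDerivAt_const (0 : ℝ) (0 : ℝ)).congr_of_eventuallyEq ?_ |>.congr_deriv (by simp)
    filter_upwards [eventually_one_sub_pos_nhds_zero] with ρ hρ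
    exact zero_rpow (by positivity)
  · have hexp : HasDerivAt (fun ρ : ℝ => 1 / (1 - ρ)) 1 0 := by
      simpa [one_div] using ((hasDerivAt_id (0 : ℝ)).const_sub 1).fun_inv (by norm_num)
    simpa [mul_comm] using hexp.const_rpow hw

lemma sum_mul_mul_log_div_sum {ι : Type*} [Fintype ι] {p w : ι → ℝ} (hp : ∀ i, 0 ≤ p i)
    (hw : ∀ i, 0 ≤ w i) :
    ∑ i, p i * w i * log (w i / ∑ j, p j * w j) =
      ∑ i, p i * (w i * log (w i)) - (∑ i, p i * w i) * log (∑ i, p i * w i) := by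
  rw [sum_mul, ← sum_sub_distrib]
  refine sum_congr rfl fun i _ => ?_
  rcases (mul_nonneg (hp i) (hw i)).eq_or_lt with h | h
  · rcases mul_eq_zero.mp h.symm with h | h <;> simp [h]
  · have hq : 0 < ∑ j, p j * w j :=
      h.trans_le (single_le_sum (fun j _ => mul_nonneg (hp j) (hw j)) (mem_univ i))
    rw [log_div (pos_of_mul_pos_right h (hp i)).ne' hq.ne']
    ring

lemma hasDerivAt_sum_mul_rpow_one_div_one_sub_rpow_one_sub {ι : Type*} [Fintype ι]
    {p w : ι → ℝ} (hp : ∀ i, 0 ≤ p i) (hw : ∀ i, 0 ≤ w i) :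
    HasDerivAt (fun ρ : ℝ => (∑ i, p i * w i ^ (1 / (1 - ρ))) ^ (1 - ρ))
      (∑ i, p i * w i * log (w i / ∑ j, p j * w j)) 0 := by
  set S : ℝ → ℝ := fun ρ => ∑ i, p i * w i ^ (1 / (1 - ρ))
  have hS : HasDerivAt S (∑ i, p i * (w i * log (w i))) 0 :=
    HasDerivAt.fun_sum fun i _ => (hasDerivAt_rpow_one_div_one_sub (hw i)).const_mul (p i)
  have hS0 : S 0 = ∑ i, p i * w i := by simp [S]
  rw [sum_mul_mul_log_div_sum hp hw, ← hS0]
  rcases (hS0 ▸ sum_nonneg fun i _ => mul_nonneg (hp i) (hw i) : 0 ≤ S 0).eq_or_lt with hq | hq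
  · have hterm : ∀ i, p i * w i = 0 := fun i =>
      (sum_eq_zero_iff_of_nonneg fun j _ => mul_nonneg (hp j) (hw j)).mp
        (hS0 ▸ hq.symm) i (mem_univ i)
    have hzero : ∀ i, p i = 0 ∨ w i = 0 := fun i => mul_eq_zero.mp (hterm i)
    refine (hasDerivAt_const (0 : ℝ) (0 : ℝ)).congr_of_eventuallyEq ?_ |>.congr_deriv ?_
    · filter_upwards [eventually_one_sub_pos_nhds_zero] with ρ hρ
      have hSρ : S ρ = 0 := sum_eq_zero fun i _ => by
        rcases hzero i with h | h <;> simp [h, zero_rpow (inv_pos.mpr hρ).ne']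
      show S ρ ^ (1 - ρ) = 0
      rw [hSρ, zero_rpow hρ.ne']
    · rw [← hq, log_zero, mul_zero, sub_zero]
      exact (sum_eq_zero fun i _ => by rcases hzero i with h | h <;> simp [h]).symm
  · refine (hS.rpow ((hasDerivAt_id (0 : ℝ)).const_sub 1) hq).congr_deriv ?_
    simp only [id, sub_zero, sub_self, rpow_zero, rpow_one]
    ring

/-- `φ(ρ, W, P)/ρ → I(V; Z)` as `ρ → 0⁺`, where
`φ(ρ, W, P) = log ∑ z, (∑ v, P v * W v z ^ (1/(1-ρ))) ^ (1-ρ)` and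
`I(V; Z) = ∑ v ∑ z, P v * W v z * log(W v z / ∑ v', P v' * W v' z)`. -/
theorem stmt_8 {V Z : Type} [Fintype V] [Fintype Z]
    (W : V → Z → ℝ) (hW : IsChannel W)
    (P : V → ℝ) (hP : IsPMF P) :
    Filter.Tendsto
      (fun ρ : ℝ =>
        Real.log (∑ z, (∑ v, P v * W v z ^ (1 / (1 - ρ))) ^ (1 - ρ)) / ρ)
      (nhdsWithin 0 (Set.Ioi 0))
      (nhds (∑ v, ∑ z, P v * W v z *
        Real.log (W v z / ∑ v', P v' * W v' z))) := by
  have hT : HasDerivAt (fun ρ : ℝ => ∑ z, (∑ v, P v * W v z ^ (1 / (1 - ρ))) ^ (1 - ρ))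
      (∑ z, ∑ v, P v * W v z * log (W v z / ∑ v', P v' * W v' z)) 0 :=
    HasDerivAt.fun_sum fun z _ =>
      hasDerivAt_sum_mul_rpow_one_div_one_sub_rpow_one_sub hP.1 fun v => (hW v).1 z
  have hT0 : ∑ z, (∑ v, P v * W v z ^ (1 / (1 - (0 : ℝ)))) ^ (1 - (0 : ℝ)) = 1 := by
    simp only [sub_zero, div_one, rpow_one]
    rw [sum_comm]
    simp [← mul_sum, (hW _).2, hP.2]
  have hφ := hT.log (by rw [hT0]; exact one_ne_zero)
  rw [hT0, div_one, sum_comm] at hφ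
  exact hφ.tendsto_div_nhdsGT_zero (by rw [hT0, log_one])
end
end
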